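/- arXiv:2204.03073 — 6 statements merged into one kernel-verified Lean document; each statement's English description precedes it below -/
import Mathlib

section
/- Let ρ̂ > 1 and let 𝒳 : ℂ → Matrix (Fin n) (Fin n_t) ℂ be a matrix-valued function each of whose entries z ↦ 𝒳(z)_{ij} is complex-differentiable on the open disc {z ∈ ℂ : |z| < ρ̂}. Fix R with 1 < R < ρ̂ and an integer d ≥ 1, set ω_k = exp(2πik/d) for k = 0,…,d−1, and let X̃ = (𝒳(ω_0) + ⋯ + 𝒳(ω_{d−1}))/d. Then for every index pair (i,j): |𝒳(0)_{ij} − X̃_{ij}| ≤ (sup_{|z|=R} |𝒳(z)_{ij}|)/(R^d − 1). -/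
/-!
Expand an entry `f = 𝒳ᵢⱼ` in its Taylor series `∑ aₘ zᵐ` at `0`, which converges on the unit
circle. Since `∑ₖ ωₖᵐ` is `d` when `d ∣ m` and `0` otherwise, the average over the roots of unity
is `∑ₜ a_{dt}`, so the error is the tail `∑_{t ≥ 1} a_{dt}`. With `M` the maximum of `‖f‖` on the
circle `|z| = R`, Cauchy's estimate `‖aₘ‖ ≤ M / Rᵐ` bounds the tail by the geometric series
`M ∑_{t ≥ 1} R^{-dt} = M / (R^d - 1)`.
-/

open Complex Metric Finset
open scoped Nat

theorem IsPrimitiveRoot.sum_pow_pow_eq_ite {R : Type*} [CommRing R] [IsDomain R] {ζ : R} {d : ℕ}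
    (hζ : IsPrimitiveRoot ζ d) (m : ℕ) :
    ∑ k ∈ range d, (ζ ^ k) ^ m = if d ∣ m then (d : R) else 0 := by
  simp_rw [← pow_mul, mul_comm _ m, pow_mul]
  split_ifs with hdm
  · simp [(hζ.pow_eq_one_iff_dvd m).2 hdm]
  · have hroot : (ζ ^ m) ^ d = 1 := by rw [← pow_mul, mul_comm, pow_mul, hζ.pow_eq_one, one_pow]
    have hgeom := mul_geom_sum (ζ ^ m) d
    rw [hroot, sub_self, mul_eq_zero] at hgeom
    exact hgeom.resolve_left (sub_ne_zero.2 ((hζ.pow_eq_one_iff_dvd m).not.2 hdm))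

theorem IsPrimitiveRoot.hasSum_coeff_mul_average {E : Type*} [NormedAddCommGroup E]
    [NormedSpace ℂ E] {ζ : ℂ} {d : ℕ} (hζ : IsPrimitiveRoot ζ d) (hd : d ≠ 0) {f : ℂ → E}
    {a : ℕ → E} (hf : ∀ k ∈ range d, HasSum (fun m => (ζ ^ k) ^ m • a m) (f (ζ ^ k))) :
    HasSum (fun t => a (d * t)) ((d : ℂ)⁻¹ • ∑ k ∈ range d, f (ζ ^ k)) := by
  have hdC : (d : ℂ) ≠ 0 := Nat.cast_ne_zero.2 hd
  have hfilter : HasSum (fun m => if d ∣ m then a m else 0)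
      ((d : ℂ)⁻¹ • ∑ k ∈ range d, f (ζ ^ k)) := by
    convert (hasSum_sum hf).const_smul (d : ℂ)⁻¹ using 2 with m
    rw [← sum_smul, hζ.sum_pow_pow_eq_ite]
    split_ifs <;> simp [hdC]
  refine ((mul_right_injective₀ hd).hasSum_iff ?_).2 hfilter |>.congr_fun fun t => ?_
  · intro m hm
    rw [if_neg]
    rintro ⟨t, rfl⟩
    exact hm ⟨t, rfl⟩
  · simp

theorem HasSum.norm_sub_apply_zero_le {E : Type*} [NormedAddCommGroup E] {a : ℕ → E} {S : E}
    (hS : HasSum a S) {M R : ℝ} (hR : 1 < R) (ha : ∀ t, ‖a t‖ ≤ M / R ^ t) :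
    ‖S - a 0‖ ≤ M / (R - 1) := by
  have hR0 : 0 < R := one_pos.trans hR
  have htail : HasSum (fun t => a (t + 1)) (S - a 0) := by
    simpa using (hasSum_nat_add_iff' 1).2 hS
  have hgeom : HasSum (fun t => M / R * R⁻¹ ^ t) (M / R * (1 - R⁻¹)⁻¹) :=
    (hasSum_geometric_of_lt_one (by positivity) (inv_lt_one_of_one_lt₀ hR)).mul_left _
  calc ‖S - a 0‖ ≤ M / R * (1 - R⁻¹)⁻¹ :=
        htail.norm_le_of_bounded hgeom fun t =>
          (ha (t + 1)).trans_eq (by rw [inv_pow, pow_succ]; field_simp)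
    _ = M / (R - 1) := by field_simp

theorem IsCompact.norm_le_iSup {X F : Type*} [TopologicalSpace X] [NormedAddCommGroup F]
    {K : Set X} (hK : IsCompact K) {f : X → F} (hf : ContinuousOn f K) {x : X} (hx : x ∈ K) :
    ‖f x‖ ≤ ⨆ y : K, ‖f y‖ := by
  have hbdd := (hK.image_of_continuousOn hf.norm).bddAbove
  rw [Set.image_eq_range] at hbdd
  exact le_ciSup hbdd ⟨x, hx⟩

namespace Complex

variable {E : Type*} [NormedAddCommGroup E] [NormedSpace ℂ E]

noncomputable def taylorCoeff (f : ℂ → E) (c : ℂ) (m : ℕ) : E :=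
  (m ! : ℂ)⁻¹ • iteratedDeriv m f c

@[simp]
theorem taylorCoeff_zero (f : ℂ → E) (c : ℂ) : taylorCoeff f c 0 = f c := by
  simp [taylorCoeff]

theorem hasSum_pow_smul_taylorCoeff [CompleteSpace E] {f : ℂ → E} {c : ℂ} {r : ℝ}
    (hf : DifferentiableOn ℂ f (ball c r)) {z : ℂ} (hz : z ∈ ball c r) :
    HasSum (fun m => (z - c) ^ m • taylorCoeff f c m) (f z) := by
  simpa only [taylorCoeff, smul_comm _ ((z - c) ^ _)] using hasSum_taylorSeries_on_ball hf hz

theorem norm_taylorCoeff_le [CompleteSpace E] {f : ℂ → E} {c : ℂ} {R M : ℝ} (hR : 0 < R)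
    (hf : DiffContOnCl ℂ f (ball c R)) (hM : ∀ z ∈ sphere c R, ‖f z‖ ≤ M) (m : ℕ) :
    ‖taylorCoeff f c m‖ ≤ M / R ^ m := by
  have hfac : (0 : ℝ) < m ! := by positivity
  rw [taylorCoeff, norm_smul, norm_inv, Complex.norm_natCast, inv_mul_le_iff₀ hfac]
  exact (norm_iteratedDeriv_le_of_forall_mem_sphere_norm_le m hR hf hM).trans_eq (by ring)

end Complex

theorem evaluation_interpolation_error_bound_general
    {n nt : ℕ} (ρhat R : ℝ) (hR1 : 1 < R) (hRρ : R < ρhat)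
    (X : ℂ → Matrix (Fin n) (Fin nt) ℂ)
    (hanal : ∀ i j, DifferentiableOn ℂ (fun z => X z i j) (Metric.ball (0 : ℂ) ρhat))
    (d : ℕ) (hd : 1 ≤ d)
    (Xavg : Matrix (Fin n) (Fin nt) ℂ)
    (hXavg : Xavg = (d : ℂ)⁻¹ •
      ∑ k ∈ Finset.range d, X (Complex.exp (2 * Real.pi * Complex.I * k / d))) :
    ∀ i j, ‖X 0 i j - Xavg i j‖ ≤
      (⨆ z : Metric.sphere (0 : ℂ) R, ‖X z i j‖) / (R ^ d - 1) := by
  intro i j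
  set f : ℂ → ℂ := fun z => X z i j
  set ζ := exp (2 * Real.pi * I / d)
  have hd0 : d ≠ 0 := by omega
  have hζ : IsPrimitiveRoot ζ d := Complex.isPrimitiveRoot_exp d hd0
  have hroots (k : ℕ) : exp (2 * Real.pi * I * k / d) = ζ ^ k := by
    rw [← Complex.exp_nat_mul]; ring_nf
  have hfR : DiffContOnCl ℂ f (ball 0 R) := by
    refine ((hanal i j).mono ?_).diffContOnCl
    rw [closure_ball 0 (by linarith)]
    exact closedBall_subset_ball hRρ
  have hcoeff := norm_taylorCoeff_le (by linarith) hfR fun z hz =>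
    (isCompact_sphere 0 R).norm_le_iSup (hfR.continuousOn_ball.mono sphere_subset_closedBall) hz
  have hseries (k : ℕ) (_ : k ∈ range d) :
      HasSum (fun m => (ζ ^ k) ^ m • taylorCoeff f 0 m) (f (ζ ^ k)) := by
    have hk : ζ ^ k ∈ ball 0 ρhat := by
      simpa [hζ.norm'_eq_one hd0] using hR1.trans hRρ
    simpa using hasSum_pow_smul_taylorCoeff (hanal i j) hk
  have havg : HasSum (fun t => taylorCoeff f 0 (d * t)) (Xavg i j) := by
    simpa [hXavg, hroots, Matrix.sum_apply] using hζ.hasSum_coeff_mul_average hd0 hseries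
  simpa [norm_sub_rev] using havg.norm_sub_apply_zero_le (one_lt_pow₀ hR1 hd0) fun t =>
    (hcoeff _).trans_eq (by rw [pow_mul])

/-- Error bound for approximating 𝒳(0) by the average of 𝒳 over the d-th roots of unity,
for an entrywise analytic matrix-valued function 𝒳 on the disc of radius ρ̂. -/
theorem evaluation_interpolation_error_bound
    {n nt : ℕ} (ρhat R : ℝ) (hρhat : 1 < ρhat) (hR1 : 1 < R) (hRρ : R < ρhat)
    (X : ℂ → Matrix (Fin n) (Fin nt) ℂ)
    (hanal : ∀ i j, DifferentiableOn ℂ (fun z => X z i j) (Metric.ball (0 : ℂ) ρhat))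
    (d : ℕ) (hd : 1 ≤ d)
    (Xavg : Matrix (Fin n) (Fin nt) ℂ)
    (hXavg : Xavg = (d : ℂ)⁻¹ •
      ∑ k ∈ Finset.range d, X (Complex.exp (2 * Real.pi * Complex.I * k / d))) :
    ∀ i j, ‖X 0 i j - Xavg i j‖ ≤
      (⨆ z : Metric.sphere (0 : ℂ) R, ‖X z i j‖) / (R ^ d - 1) :=
  evaluation_interpolation_error_bound_general ρhat R hR1 hRρ X hanal d hd Xavg hXavg
end

section
/- Let n ≥ 1 and α ∈ ℂ, and let C^{(α)} be the n×n complex matrix defined by C^{(α)} = Iₙ − S − α·e₁·eₙᵀ, where S is the subdiagonal shift matrix (S(i,j) = 1 if i = j+1 and 0 otherwise) and e₁, eₙ are the first and last standard basis vectors. Then for every x ∈ ℂ: det(x·Iₙ − C^{(α)}) = (x − 1)ⁿ − (−1)ⁿ·α. -/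
/-!
`x • 1 - C` has `x - 1` on the diagonal, `1` on the subdiagonal and `α` in the top-right corner.
Expanding along the first row, only the diagonal and the corner entry survive: the minor opposite
the diagonal entry is lower bidiagonal with diagonal `x - 1`, and the minor opposite the corner is
upper bidiagonal with diagonal `1`, entering with the sign `(-1) ^ (n - 1)`.
-/

open Matrix

namespace Matrix

variable {R : Type*} [CommRing R]

def bidiagonalWithCorner (n : ℕ) (d s c : R) : Matrix (Fin n) (Fin n) R :=
  of fun i j => (if (i : ℕ) = j then d else 0) + (if (i : ℕ) = j + 1 then s else 0) +
    if (i : ℕ) = 0 ∧ (j : ℕ) = n - 1 then c else 0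

theorem det_bidiagonalWithCorner_zero (n : ℕ) (d s : R) :
    (bidiagonalWithCorner n d s 0).det = d ^ n := by
  have hlower : (bidiagonalWithCorner n d s 0).BlockTriangular OrderDual.toDual := by
    intro i j hij
    have hij : (i : ℕ) < j := hij
    simp [bidiagonalWithCorner, hij.ne, show (i : ℕ) ≠ j + 1 by omega]
  rw [det_of_isLowerTriangular _ hlower]
  simp [bidiagonalWithCorner]

theorem submatrix_succ_succ_bidiagonalWithCorner (k : ℕ) (d s c : R) :
    (bidiagonalWithCorner (k + 2) d s c).submatrix Fin.succ Fin.succ =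
      bidiagonalWithCorner (k + 1) d s 0 := by
  ext a b
  simp [bidiagonalWithCorner]

theorem submatrix_succ_castSucc_bidiagonalWithCorner (k : ℕ) (d s c : R) :
    (bidiagonalWithCorner (k + 2) d s c).submatrix Fin.succ Fin.castSucc =
      (bidiagonalWithCorner (k + 1) s d 0)ᵀ := by
  ext a b
  simp only [bidiagonalWithCorner, submatrix_apply, transpose_apply, of_apply, Fin.val_succ,
    Fin.val_castSucc]
  split_ifs <;> first | omega | simp

theorem det_bidiagonalWithCorner (m : ℕ) (d s c : R) :
    (bidiagonalWithCorner (m + 1) d s c).det = d ^ (m + 1) + (-1) ^ m * c * s ^ m := by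
  rcases m with _ | k
  · simp [bidiagonalWithCorner]
  · rw [det_succ_row_zero, Fin.sum_univ_succ, Fin.sum_univ_castSucc]
    have hcorner : bidiagonalWithCorner (k + 2) d s c 0 (Fin.last (k + 1)) = c := by
      simp [bidiagonalWithCorner]
    have hdiag : bidiagonalWithCorner (k + 2) d s c 0 0 = d := by
      simp [bidiagonalWithCorner]
    have hrow_middle : ∀ i : Fin k, bidiagonalWithCorner (k + 2) d s c 0 i.castSucc.succ = 0 := by
      intro i
      simp [bidiagonalWithCorner, i.is_lt.ne]
    simp only [hrow_middle, hdiag, hcorner, mul_zero, zero_mul, Finset.sum_const_zero, zero_add,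
      Fin.succ_last, Fin.succAbove_zero, Fin.succAbove_last, Fin.val_zero, Fin.val_last,
      Nat.succ_eq_add_one, submatrix_succ_succ_bidiagonalWithCorner,
      submatrix_succ_castSucc_bidiagonalWithCorner, det_transpose, det_bidiagonalWithCorner_zero]
    ring

end Matrix

/-- Characteristic polynomial identity for the α-circulant modification
C^{(α)} = Iₙ − S − α e₁ eₙᵀ of the implicit-Euler time-stepping matrix:
det(x Iₙ − C^{(α)}) = (x − 1)ⁿ − (−1)ⁿ α. -/
theorem alpha_circulant_char_det
    (n : ℕ) (hn : 1 ≤ n) (α : ℂ)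
    (S : Matrix (Fin n) (Fin n) ℂ)
    (hS : ∀ i j : Fin n, S i j = if (i : ℕ) = (j : ℕ) + 1 then 1 else 0)
    (E : Matrix (Fin n) (Fin n) ℂ)
    (hE : ∀ i j : Fin n, E i j = if (i : ℕ) = 0 ∧ (j : ℕ) = n - 1 then 1 else 0)
    (C : Matrix (Fin n) (Fin n) ℂ) (hC : C = 1 - S - α • E) (x : ℂ) :
    (x • (1 : Matrix (Fin n) (Fin n) ℂ) - C).det = (x - 1) ^ n - (-1) ^ n * α := by
  obtain ⟨m, rfl⟩ : ∃ m, n = m + 1 := ⟨n - 1, by omega⟩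
  have hbidiagonal : x • (1 : Matrix (Fin (m + 1)) (Fin (m + 1)) ℂ) - C =
      bidiagonalWithCorner (m + 1) (x - 1) 1 α := by
    ext i j
    simp only [hC, Matrix.sub_apply, Matrix.smul_apply, one_apply, hS, hE, bidiagonalWithCorner,
      of_apply, Fin.ext_iff, smul_eq_mul]
    split_ifs <;> first | omega | ring
  rw [hbidiagonal, det_bidiagonalWithCorner]
  ring
end

section
/- Let n ≥ 1, let β ∈ ℂ with β ≠ 0, and let C^{(βⁿ)} = Iₙ − S − βⁿ·e₁·eₙᵀ as above. Let D = diag(1, β, β², …, β^{n−1}) and let P be the cyclic shift permutation matrix, P(i,j) = 1 if i ≡ j+1 (mod n) and 0 otherwise. Then D·C^{(βⁿ)}·D⁻¹ = Iₙ − β·P. -/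
open Matrix

/-!
Conjugation by `D = diag(β^i)` multiplies the entry `(i, j)` by `β^(i - j)`. The subdiagonal
entries (`i = j + 1`) are thus scaled by `β`, and the corner entry `(0, n - 1)` by `β^(1 - n)`,
which turns the weight `βⁿ` of the corner into `β`. Since the cyclic shift is the subdiagonal
shift plus the corner unit, `D C D⁻¹ = 1 - β (S + E) = 1 - β P`; equivalently
`D C = (1 - β P) D`, an identity free of inverses.
-/

namespace Matrix

variable {R : Type*} [CommRing R] {n : ℕ}

def subdiagShift : Matrix (Fin n) (Fin n) R :=
  of fun i j => if (i : ℕ) = (j : ℕ) + 1 then 1 else 0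

def cornerUnit : Matrix (Fin n) (Fin n) R :=
  of fun i j => if (i : ℕ) = 0 ∧ (j : ℕ) = n - 1 then 1 else 0

def cyclicShift : Matrix (Fin n) (Fin n) R :=
  of fun i j => if (i : ℕ) % n = ((j : ℕ) + 1) % n then 1 else 0

def powDiagonal (β : R) : Matrix (Fin n) (Fin n) R :=
  diagonal fun i => β ^ (i : ℕ)

theorem cyclicShift_eq_subdiagShift_add_cornerUnit :
    (cyclicShift : Matrix (Fin n) (Fin n) R) = subdiagShift + cornerUnit := by
  ext i j
  have hi := i.isLt
  have hj := j.isLt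
  simp only [cyclicShift, subdiagShift, cornerUnit, of_apply, add_apply, Nat.mod_eq_of_lt hi]
  rcases Nat.lt_or_ge ((j : ℕ) + 1) n with hlt | hge
  · have hcorner : ¬((i : ℕ) = 0 ∧ (j : ℕ) = n - 1) := by omega
    rw [Nat.mod_eq_of_lt hlt, if_neg hcorner, add_zero]
  · have hjn : (j : ℕ) + 1 = n := by omega
    rw [hjn, Nat.mod_self, if_neg (show (i : ℕ) ≠ n by omega), zero_add]
    exact if_congr (by omega) rfl rfl

theorem powDiagonal_mul_subdiagShift (β : R) :
    powDiagonal β * (subdiagShift : Matrix (Fin n) (Fin n) R)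
      = β • (subdiagShift * powDiagonal β) := by
  ext i j
  simp only [powDiagonal, subdiagShift, diagonal_mul, mul_diagonal, of_apply, smul_apply,
    smul_eq_mul]
  split_ifs with h
  · rw [h, pow_succ]
    ring
  · simp

theorem powDiagonal_mul_cornerUnit (β : R) :
    powDiagonal β * (cornerUnit : Matrix (Fin n) (Fin n) R) = cornerUnit := by
  ext i j
  simp only [powDiagonal, cornerUnit, diagonal_mul, of_apply]
  split_ifs with h
  · rw [h.1, pow_zero, one_mul]
  · exact mul_zero _

theorem cornerUnit_mul_powDiagonal (β : R) :
    (cornerUnit : Matrix (Fin n) (Fin n) R) * powDiagonal β = β ^ (n - 1) • cornerUnit := by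
  ext i j
  simp only [powDiagonal, cornerUnit, mul_diagonal, of_apply, smul_apply, smul_eq_mul]
  split_ifs with h
  · rw [h.2, one_mul, mul_one]
  · rw [zero_mul, mul_zero]

theorem powDiagonal_mul_alphaCirculant (hn : 1 ≤ n) (β : R) :
    powDiagonal β * (1 - subdiagShift - β ^ n • cornerUnit)
      = (1 - β • (cyclicShift : Matrix (Fin n) (Fin n) R)) * powDiagonal β := by
  have hβn : β ^ n = β * β ^ (n - 1) := by rw [← pow_succ', Nat.sub_add_cancel hn]
  rw [cyclicShift_eq_subdiagShift_add_cornerUnit, mul_sub, mul_sub, mul_smul_comm,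
    powDiagonal_mul_subdiagShift, powDiagonal_mul_cornerUnit, sub_mul, smul_mul_assoc,
    add_mul, cornerUnit_mul_powDiagonal, hβn, mul_one, one_mul, smul_add, mul_smul]
  abel

theorem isUnit_det_powDiagonal {β : R} (hβ : IsUnit β) :
    IsUnit (powDiagonal β : Matrix (Fin n) (Fin n) R).det :=
  (isUnit_iff_isUnit_det _).mp (isUnit_diagonal.mpr (Pi.isUnit_iff.mpr fun _ => hβ.pow _))

end Matrix

/-- Diagonal scaling of the βⁿ-circulant modification of the implicit-Euler
time-stepping matrix: D C^{(βⁿ)} D⁻¹ = Iₙ − β P, where D = diag(1, β, …, β^{n−1})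
and P is the cyclic shift permutation matrix. -/
theorem alpha_circulant_diagonal_scaling
    (n : ℕ) (hn : 1 ≤ n) (β : ℂ) (hβ : β ≠ 0)
    (S : Matrix (Fin n) (Fin n) ℂ)
    (hS : ∀ i j : Fin n, S i j = if (i : ℕ) = (j : ℕ) + 1 then 1 else 0)
    (E : Matrix (Fin n) (Fin n) ℂ)
    (hE : ∀ i j : Fin n, E i j = if (i : ℕ) = 0 ∧ (j : ℕ) = n - 1 then 1 else 0)
    (C : Matrix (Fin n) (Fin n) ℂ) (hC : C = 1 - S - β ^ n • E)
    (D : Matrix (Fin n) (Fin n) ℂ) (hD : D = Matrix.diagonal fun i : Fin n => β ^ (i : ℕ))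
    (P : Matrix (Fin n) (Fin n) ℂ)
    (hP : ∀ i j : Fin n, P i j = if (i : ℕ) % n = ((j : ℕ) + 1) % n then 1 else 0) :
    D * C * D⁻¹ = 1 - β • P := by
  obtain rfl : S = subdiagShift := Matrix.ext hS
  obtain rfl : E = cornerUnit := Matrix.ext hE
  obtain rfl : P = cyclicShift := Matrix.ext hP
  obtain rfl : D = powDiagonal β := hD
  rw [hC, powDiagonal_mul_alphaCirculant hn,
    mul_nonsing_inv_cancel_right _ _ (isUnit_det_powDiagonal hβ.isUnit)]
end

section
/- Let x̃ ∈ ℂ with x̃ ≠ 0 and let ρ̃ ∈ ℝ. Let w ∈ ℂ satisfy w² = (|x̃|² + 1 − ρ̃²)² − 4|x̃|², and define α = (|x̃|² + 1 − ρ̃² + w)/(2·conj(x̃)). Then α ≠ 0, and with β = 1/conj(α) the pair (α, β) satisfies the common-inverse-point equations: α·conj(β) = 1 and (α − x̃)·conj(β − x̃) = ρ̃². -/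
open ComplexConjugate

/-! With `S = |x̃|² + 1 − ρ̃²`, the number `α` is a root of `conj x̃ · z² − S z + x̃`, whose
discriminant is `S² − 4 |x̃|² = w²`; it is nonzero because `x̃` is. Since `conj β = α⁻¹`, the
second equation reads `(α − x̃)(α⁻¹ − conj x̃) = ρ̃²`, and clearing `α` turns it into
`(|x̃|² + 1 − S) α = ρ̃² α` modulo the quadratic. -/

theorem ne_zero_of_quadratic_eq_zero {R : Type*} [Semiring R] {a b c z : R} (hc : c ≠ 0)
    (hz : a * (z * z) + b * z + c = 0) : z ≠ 0 := by
  rintro rfl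
  exact hc (by simpa using hz)

theorem sub_mul_inv_sub_eq_of_quadratic_eq_zero {K : Type*} [Field K] {x y c z : K}
    (hz0 : z ≠ 0) (hz : y * (z * z) + -(x * y + 1 - c) * z + x = 0) :
    (z - x) * (z⁻¹ - y) = c := by
  field_simp
  linear_combination -hz

/-- Common inverse points for the unit circle and the circle of center xt and
radius rt: with w² = (|xt|² + 1 − rt²)² − 4|xt|² and
α = (|xt|² + 1 − rt² + w)/(2 conj xt), the pair (α, β) with β = 1/conj α
satisfies α·conj β = 1 and (α − xt)·conj(β − xt) = rt². -/
theorem common_inverse_points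
    (xt : ℂ) (hxt : xt ≠ 0) (rt : ℝ) (w : ℂ)
    (hw : w ^ 2 = ((‖xt‖ : ℂ) ^ 2 + 1 - (rt : ℂ) ^ 2) ^ 2
        - 4 * (‖xt‖ : ℂ) ^ 2)
    (α : ℂ)
    (hα : α = ((‖xt‖ : ℂ) ^ 2 + 1 - (rt : ℂ) ^ 2 + w) / (2 * conj xt)) :
    α ≠ 0 ∧
    (∀ β : ℂ, β = 1 / conj α →
      α * conj β = 1 ∧ (α - xt) * conj (β - xt) = (rt : ℂ) ^ 2) := by
  have hnorm : (‖xt‖ : ℂ) ^ 2 = xt * conj xt := (Complex.mul_conj' xt).symm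
  have hdisc : discrim (conj xt) (-(xt * conj xt + 1 - (rt : ℂ) ^ 2)) xt = w * w := by
    rw [discrim, ← hnorm]
    linear_combination -hw + 4 * hnorm
  have hroot : conj xt * (α * α) + -(xt * conj xt + 1 - (rt : ℂ) ^ 2) * α + xt = 0 :=
    (quadratic_eq_zero_iff ((map_ne_zero _).2 hxt) hdisc α).2 (.inl (by rw [hα, hnorm, neg_neg]))
  have hα0 : α ≠ 0 := ne_zero_of_quadratic_eq_zero hxt hroot
  refine ⟨hα0, fun β hβ => ?_⟩
  have hconjβ : conj β = α⁻¹ := by rw [hβ, map_div₀, map_one, Complex.conj_conj, one_div]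
  rw [map_sub, hconjβ]
  exact ⟨mul_inv_cancel₀ hα0, sub_mul_inv_sub_eq_of_quadratic_eq_zero hα0 hroot⟩
end

section
/- Let Â, M̂ be N×N complex matrices, B₁ an n_t×n_t complex matrix, G an N×n_t complex matrix, and σ ∈ ℂ such that both M̂ + σ·Â and I − σ·B₁ are invertible. Then an N×n_t matrix δX satisfies Â·δX + M̂·δX·B₁ᵀ = G if and only if it satisfies Ã·δX + δX·B̃ᵀ = (M̂ + σ·Â)⁻¹·G·((I − σ·B₁)⁻¹)ᵀ, where Ã = (M̂ + σ·Â)⁻¹·Â and B̃ = (I − σ·B₁)⁻¹·B₁. -/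
open Matrix

/-- Shift trick for the Runge–Kutta update equation: with M̂ + σÂ and I − σB₁
invertible, the generalized Sylvester equation Â δX + M̂ δX B₁ᵀ = G is
equivalent to the standard Sylvester equation Ã δX + δX B̃ᵀ = RHS with
Ã = (M̂ + σÂ)⁻¹Â and B̃ = (I − σB₁)⁻¹B₁. -/
theorem runge_kutta_shift_trick
    {N nt : ℕ} (Ahat Mhat : Matrix (Fin N) (Fin N) ℂ)
    (B₁ : Matrix (Fin nt) (Fin nt) ℂ)
    (G : Matrix (Fin N) (Fin nt) ℂ) (σ : ℂ)
    (hA : IsUnit (Mhat + σ • Ahat)) (hB : IsUnit (1 - σ • B₁))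
    (δX : Matrix (Fin N) (Fin nt) ℂ) :
    Ahat * δX + Mhat * δX * B₁ᵀ = G ↔
      ((Mhat + σ • Ahat)⁻¹ * Ahat) * δX + δX * ((1 - σ • B₁)⁻¹ * B₁)ᵀ =
        (Mhat + σ • Ahat)⁻¹ * G * ((1 - σ • B₁)⁻¹)ᵀ := by
  set P := Mhat + σ • Ahat with hP
  set Q := 1 - σ • B₁ with hQ
  have hAd : IsUnit P.det := (Matrix.isUnit_iff_isUnit_det _).mp hA
  have hBd : IsUnit Q.det := (Matrix.isUnit_iff_isUnit_det _).mp hB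
  have hQTd : IsUnit Qᵀ.det := by rwa [Matrix.det_transpose]
  have hPinv : P⁻¹ * P = 1 := Matrix.nonsing_inv_mul _ hAd
  have hPinv' : P * P⁻¹ = 1 := Matrix.mul_nonsing_inv _ hAd
  have hQTinv : (Qᵀ)⁻¹ * Qᵀ = 1 := Matrix.nonsing_inv_mul _ hQTd
  have hQTinv' : Qᵀ * (Qᵀ)⁻¹ = 1 := Matrix.mul_nonsing_inv _ hQTd
  have htr : (Q⁻¹)ᵀ = (Qᵀ)⁻¹ := Matrix.transpose_nonsing_inv _
  -- key identity
  have key : P * ((P⁻¹ * Ahat) * δX + δX * (Q⁻¹ * B₁)ᵀ) * Qᵀ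
      = Ahat * δX + Mhat * δX * B₁ᵀ := by
    have h1 : P * ((P⁻¹ * Ahat) * δX) = Ahat * δX := by
      rw [← Matrix.mul_assoc, ← Matrix.mul_assoc, hPinv', Matrix.one_mul]
    have h2 : P * (δX * (Q⁻¹ * B₁)ᵀ) * Qᵀ = P * (δX * B₁ᵀ) := by
      rw [Matrix.transpose_mul, htr]
      simp only [Matrix.mul_assoc]
      rw [hQTinv, Matrix.mul_one]
    rw [Matrix.mul_add, h1, Matrix.add_mul, h2]
    have hQT : Qᵀ = 1 - σ • B₁ᵀ := by
      rw [hQ, Matrix.transpose_sub, Matrix.transpose_smul, Matrix.transpose_one]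
    rw [hQT, hP]
    simp only [Matrix.mul_sub, Matrix.sub_mul, Matrix.mul_one, Matrix.one_mul,
      Matrix.add_mul, Matrix.mul_smul, Matrix.smul_mul, Matrix.mul_assoc]
    abel
  constructor
  · intro h
    rw [htr]
    have e : P⁻¹ * (P * ((P⁻¹ * Ahat) * δX + δX * (Q⁻¹ * B₁)ᵀ) * Qᵀ) * (Qᵀ)⁻¹
        = (P⁻¹ * Ahat) * δX + δX * (Q⁻¹ * B₁)ᵀ := by
      simp only [← Matrix.mul_assoc]
      rw [hPinv, Matrix.one_mul, Matrix.mul_assoc, hQTinv', Matrix.mul_one]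
    rw [← e, key, h]
  · intro h
    have := congrArg (fun Z => P * Z * Qᵀ) h
    rw [key] at this
    rw [this, htr]
    simp only [← Matrix.mul_assoc]
    rw [hPinv', Matrix.one_mul, Matrix.mul_assoc, hQTinv, Matrix.mul_one]
end

section
/- Let m ≥ 1, let B₁ be the m×m lower bidiagonal Toeplitz matrix with 1 on the diagonal and −1 on the first subdiagonal, and let σ ∈ ℂ with σ ≠ 1. Define the lower triangular Toeplitz matrix B̃ by B̃(i,j) = 0 for i < j, B̃(i,i) = (1−σ)⁻¹, and B̃(i,j) = (1−σ)⁻¹·σ^{i−j−1}/(σ−1)^{i−j} for i > j. Then (I − σ·B₁)·B̃ = B₁; in particular, since I − σ·B₁ is invertible, B̃ = (I − σ·B₁)⁻¹·B₁, and B̃ is lower triangular with all diagonal entries equal to (1−σ)⁻¹, so its only eigenvalue is (1−σ)⁻¹ with multiplicity m. -/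
/-!
Lower triangular Toeplitz `m × m` matrices are the matrices of multiplication by power series
on `R⟦X⟧ ⧸ (X ^ m)`, so `f ↦ (coeff (i - j) f)ᵢⱼ` is multiplicative. `B₁` corresponds to `1 - X`
and `B̃` to a series `t`, and `(I - σB₁) B̃ = B₁` becomes `(1 - σ(1 - X)) t = 1 - X`, a two-term
recurrence for the coefficients of `t`. Determinant and characteristic polynomial of such a
matrix only see its diagonal, the constant coefficient: this makes `I - σB₁` invertible
(constant coefficient `1 - σ`) and gives the spectrum of `B̃`.
-/

section LowerToeplitz

open PowerSeries

variable {R : Type*}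

noncomputable def lowerToeplitz [Semiring R] (m : ℕ) (f : R⟦X⟧) : Matrix (Fin m) (Fin m) R :=
  Matrix.of fun i j => if (j : ℕ) ≤ i then coeff ((i : ℕ) - j) f else 0

variable {m : ℕ}

theorem lowerToeplitz_apply [Semiring R] (f : R⟦X⟧) (i j : Fin m) :
    lowerToeplitz m f i j = if (j : ℕ) ≤ i then coeff ((i : ℕ) - j) f else 0 :=
  rfl

@[simp]
theorem lowerToeplitz_one [Semiring R] : lowerToeplitz m (1 : R⟦X⟧) = 1 := by
  ext i j
  simp only [lowerToeplitz_apply, coeff_one, Matrix.one_apply, Fin.ext_iff]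
  split_ifs <;> first | rfl | omega

@[simp]
theorem lowerToeplitz_sub [Ring R] (f g : R⟦X⟧) :
    lowerToeplitz m (f - g) = lowerToeplitz m f - lowerToeplitz m g := by
  ext i j
  simp only [lowerToeplitz_apply, map_sub, Matrix.sub_apply]
  split_ifs <;> simp

@[simp]
theorem lowerToeplitz_smul [Semiring R] (a : R) (f : R⟦X⟧) :
    lowerToeplitz m (a • f) = a • lowerToeplitz m f := by
  ext i j
  simp only [lowerToeplitz_apply, coeff_smul, Matrix.smul_apply]
  split_ifs <;> simp

theorem lowerToeplitz_mul [Semiring R] (f g : R⟦X⟧) :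
    lowerToeplitz m (f * g) = lowerToeplitz m f * lowerToeplitz m g := by
  ext i j
  simp only [lowerToeplitz_apply, Matrix.mul_apply, coeff_mul, ite_zero_mul_ite_zero]
  rw [Fin.sum_univ_eq_sum_range (fun k => if k ≤ (i : ℕ) ∧ (j : ℕ) ≤ k then
    coeff ((i : ℕ) - k) f * coeff (k - j) g else 0), ← Finset.sum_filter]
  have hIcc :
      (Finset.range m).filter (fun k => k ≤ (i : ℕ) ∧ (j : ℕ) ≤ k) = Finset.Icc (j : ℕ) i := by
    ext k
    simp only [Finset.mem_filter, Finset.mem_range, Finset.mem_Icc]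
    omega
  rw [hIcc]
  split_ifs with hji
  · refine Finset.sum_nbij' (fun p => j + p.2) (fun k => ((i : ℕ) - k, k - j))
      ?_ ?_ ?_ ?_ ?_ <;> intro p hp <;>
      simp only [Finset.mem_Icc, Finset.HasAntidiagonal.mem_antidiagonal, Prod.ext_iff] at hp ⊢
    all_goals first | omega | congr 3 <;> omega
  · rw [Finset.Icc_eq_empty hji, Finset.sum_empty]

theorem lowerToeplitz_isLowerTriangular [Semiring R] (f : R⟦X⟧) :
    (lowerToeplitz m f).IsLowerTriangular := fun i j hij => by
  simp [lowerToeplitz_apply, not_le.mpr (show (i : ℕ) < j from hij)]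

theorem det_lowerToeplitz [CommRing R] (f : R⟦X⟧) :
    (lowerToeplitz m f).det = constantCoeff f ^ m := by
  simp [Matrix.det_of_isLowerTriangular _ (lowerToeplitz_isLowerTriangular f), lowerToeplitz_apply]

theorem charpoly_lowerToeplitz [CommRing R] (f : R⟦X⟧) :
    (lowerToeplitz m f).charpoly = (Polynomial.X - Polynomial.C (constantCoeff f)) ^ m := by
  rw [← Matrix.charpoly_transpose,
    Matrix.charpoly_of_isUpperTriangular (lowerToeplitz m f).transpose
      fun i j hij => lowerToeplitz_isLowerTriangular f hij]
  simp [lowerToeplitz_apply]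

theorem lowerToeplitz_one_sub_X_apply [Ring R] (i j : Fin m) :
    lowerToeplitz m (1 - X : R⟦X⟧) i j =
      if i = j then 1 else if (i : ℕ) = (j : ℕ) + 1 then -1 else 0 := by
  simp only [lowerToeplitz_apply, map_sub, coeff_one, coeff_X, Fin.ext_iff]
  split_ifs <;> first | omega | simp

end LowerToeplitz

section TransformedUpdate

open PowerSeries

variable {K : Type*} [Field K] {σ : K}

/-- The expansion of `(1 - X) / (1 - σ (1 - X))`, i.e. the first column of `B̃`. -/
noncomputable def transformedUpdateSeries (σ : K) : K⟦X⟧ :=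
  mk fun n => if n = 0 then (1 - σ)⁻¹ else (1 - σ)⁻¹ * σ ^ (n - 1) / (σ - 1) ^ n

theorem one_sub_smul_one_sub_X_mul_transformedUpdateSeries (hσ : σ ≠ 1) :
    (1 - σ • (1 - X)) * transformedUpdateSeries σ = 1 - X := by
  have h1σ : 1 - σ ≠ 0 := sub_ne_zero.mpr hσ.symm
  have hσ1 : σ - 1 ≠ 0 := sub_ne_zero.mpr hσ
  have hsplit : (1 - σ • (1 - X)) * transformedUpdateSeries σ =
      (1 - σ) • transformedUpdateSeries σ + σ • (X * transformedUpdateSeries σ) := by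
    simp only [sub_mul, smul_mul_assoc, one_mul, smul_sub]
    module
  ext n
  rw [hsplit, map_add, coeff_smul, coeff_smul]
  rcases n with _ | _ | n
  · simp [transformedUpdateSeries, h1σ]
  · simp [transformedUpdateSeries, coeff_succ_X_mul, coeff_one, coeff_X]
    field_simp
    ring
  · simp [transformedUpdateSeries, coeff_succ_X_mul, coeff_one, coeff_X]
    field_simp
    ring

theorem lowerToeplitz_transformedUpdateSeries_apply {m : ℕ} (i j : Fin m) :
    lowerToeplitz m (transformedUpdateSeries σ) i j =
      if (i : ℕ) < (j : ℕ) then 0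
      else if i = j then (1 - σ)⁻¹
      else (1 - σ)⁻¹ * σ ^ ((i : ℕ) - (j : ℕ) - 1) / (σ - 1) ^ ((i : ℕ) - (j : ℕ)) := by
  simp only [lowerToeplitz_apply, transformedUpdateSeries, coeff_mk, Fin.ext_iff]
  split_ifs <;> first | rfl | omega

end TransformedUpdate

open Matrix Polynomial

theorem transformed_update_coefficient_general
    (m : ℕ) (σ : ℂ) (hσ : σ ≠ 1)
    (B₁ : Matrix (Fin m) (Fin m) ℂ)
    (hB₁ : ∀ i j : Fin m, B₁ i j =
      if i = j then 1 else if (i : ℕ) = (j : ℕ) + 1 then -1 else 0)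
    (Bt : Matrix (Fin m) (Fin m) ℂ)
    (hBt : ∀ i j : Fin m, Bt i j =
      if (i : ℕ) < (j : ℕ) then 0
      else if i = j then (1 - σ)⁻¹
      else (1 - σ)⁻¹ * σ ^ ((i : ℕ) - (j : ℕ) - 1) / (σ - 1) ^ ((i : ℕ) - (j : ℕ))) :
    (1 - σ • B₁) * Bt = B₁ ∧
    Bt = (1 - σ • B₁)⁻¹ * B₁ ∧
    Bt.charpoly = (X - C ((1 - σ)⁻¹)) ^ m := by
  have hB₁_eq : B₁ = lowerToeplitz m (1 - PowerSeries.X) := by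
    ext i j
    rw [hB₁, lowerToeplitz_one_sub_X_apply]
  have hBt_eq : Bt = lowerToeplitz m (transformedUpdateSeries σ) := by
    ext i j
    rw [hBt, lowerToeplitz_transformedUpdateSeries_apply]
  have hA : 1 - σ • B₁ = lowerToeplitz m (1 - σ • (1 - PowerSeries.X)) := by
    simp [hB₁_eq]
  have hmul : (1 - σ • B₁) * Bt = B₁ := by
    rw [hA, hBt_eq, ← lowerToeplitz_mul,
      one_sub_smul_one_sub_X_mul_transformedUpdateSeries hσ, hB₁_eq]
  have hdet : IsUnit (1 - σ • B₁).det := by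
    rw [hA, det_lowerToeplitz]
    refine (isUnit_iff_ne_zero.mpr ?_).pow m
    simpa using sub_ne_zero.mpr hσ.symm
  refine ⟨hmul, ?_, ?_⟩
  · calc Bt = (1 - σ • B₁)⁻¹ * ((1 - σ • B₁) * Bt) :=
          (nonsing_inv_mul_cancel_left _ _ hdet).symm
      _ = (1 - σ • B₁)⁻¹ * B₁ := by rw [hmul]
  · rw [hBt_eq, charpoly_lowerToeplitz]
    simp [transformedUpdateSeries]

/-- The explicit lower triangular Toeplitz matrix B̃ satisfies
(I − σB₁)·B̃ = B₁, hence B̃ = (I − σB₁)⁻¹·B₁, and its characteristic polynomial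
is (X − (1−σ)⁻¹)^m, i.e. its only eigenvalue is (1−σ)⁻¹ with multiplicity m. -/
theorem transformed_update_coefficient
    (m : ℕ) (hm : 1 ≤ m) (σ : ℂ) (hσ : σ ≠ 1)
    (B₁ : Matrix (Fin m) (Fin m) ℂ)
    (hB₁ : ∀ i j : Fin m, B₁ i j =
      if i = j then 1 else if (i : ℕ) = (j : ℕ) + 1 then -1 else 0)
    (Bt : Matrix (Fin m) (Fin m) ℂ)
    (hBt : ∀ i j : Fin m, Bt i j =
      if (i : ℕ) < (j : ℕ) then 0
      else if i = j then (1 - σ)⁻¹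
      else (1 - σ)⁻¹ * σ ^ ((i : ℕ) - (j : ℕ) - 1) / (σ - 1) ^ ((i : ℕ) - (j : ℕ))) :
    (1 - σ • B₁) * Bt = B₁ ∧
    Bt = (1 - σ • B₁)⁻¹ * B₁ ∧
    Bt.charpoly = (X - C ((1 - σ)⁻¹)) ^ m :=
  transformed_update_coefficient_general m σ hσ B₁ hB₁ Bt hBt
end
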